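/- Let R be a finite commutative chain ring with maximal ideal γR, nilpotency index ν (the least positive integer with γ^ν = 0) and residue field of size q = |R/γR|, and choose the representatives a_i = γ^{ν−i} for i = 0, …, ν (so t = ν and a_ν = 1). Let C be a linear code of length n over R and let χ be a generating character of R. Then swe_{C⊥}(x) = (1/|C|) · swe_C(Sx), where S = (s_{ij}) is the (ν+1)×(ν+1) matrix with rows and columns indexed by {0,…,ν} and, for all i, j, s_{ij} = Σ_{r ∈ γ^{ν−j}R^×} χ(r γ^{ν−i}) = 1 if j = 0; = q^j − q^{j−1} if 1 ≤ j ≤ ν − i; = −q^{ν−i} if j = ν + 1 − i; and = 0 otherwise. Here γ^{ν−j}R^× = {γ^{ν−j}u : u a unit of R}. -/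

import Mathlib

noncomputable section
open scoped BigOperators

/-- The dual of a linear code `C ⊆ Rⁿ` with respect to the standard inner
product `u·v = ∑ ℓ, u ℓ * v ℓ`. -/
def dualCode {R : Type*} [CommRing R] {n : ℕ} (C : Submodule R (Fin n → R)) :
    Submodule R (Fin n → R) where
  carrier := {v | ∀ u ∈ C, ∑ ℓ, u ℓ * v ℓ = 0}
  add_mem' := by
    intro v w hv hw u hu
    simp only [Set.mem_setOf_eq] at *
    have h1 := hv u hu
    have h2 := hw u hu
    simp only [Pi.add_apply, mul_add, Finset.sum_add_distrib, h1, h2, add_zero]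
  zero_mem' := by
    intro u hu
    simp
  smul_mem' := by
    intro c v hv u hu
    simp only [Set.mem_setOf_eq] at *
    have h := hv u hu
    have : ∑ ℓ, u ℓ * (c • v) ℓ = c * ∑ ℓ, u ℓ * v ℓ := by
      rw [Finset.mul_sum]
      exact Finset.sum_congr rfl fun ℓ _ => by
        simp only [Pi.smul_apply, smul_eq_mul]; ring
    rw [this, h, mul_zero]

/-- A finite commutative ring is Frobenius iff `|C|·|C⊥| = |R|ⁿ` for every
linear code `C` of every length `n` over `R`. -/
def IsFrobeniusRing (R : Type*) [CommRing R] [Fintype R] : Prop :=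
  ∀ (n : ℕ) (C : Submodule R (Fin n → R)),
    Nat.card C * Nat.card (dualCode C) = Fintype.card R ^ n

open MvPolynomial Classical

/-- The symmetrized weight composition `swc_i(c) = |{ℓ : c_ℓ R = a_i R}|`. -/
def swc {R : Type*} [CommRing R] {t n : ℕ} (a : Fin (t + 1) → R)
    (c : Fin n → R) (i : Fin (t + 1)) : ℕ :=
  Nat.card {ℓ : Fin n // Ideal.span {c ℓ} = Ideal.span {a i}}

/-- The symmetrized weight enumerator
`swe_C(x₀, …, x_t) = ∑_{c ∈ C} ∏ᵢ xᵢ^(swcᵢ(c))`, with complex coefficients. -/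
def swe {R : Type*} [CommRing R] [Fintype R] {t n : ℕ} (a : Fin (t + 1) → R)
    (C : Submodule R (Fin n → R)) : MvPolynomial (Fin (t + 1)) ℂ :=
  haveI : Fintype C := Fintype.ofFinite C
  ∑ c : C, ∏ i, X i ^ swc a (c : Fin n → R) i

/-!
Write every element of `R` as `γ ^ k * u` with `u` a unit and `k ≤ ν`; its ideal is `γ ^ k R`, so
the symmetrized weight composition of a word only records these exponents ("types") of its
coordinates. Since `χ` is generating, `∑_{u ∈ C} χ (u · v)` is `|C|` on `C⊥` and `0` off it, which
turns `|C| · swe_{C⊥}` into a sum over `C` of products of one-coordinate transforms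
`∑_d χ (c d) x_{type d}`. Such a transform depends only on the type `i` of `c` and equals
`∑_j s_{ij} x_j`: the elements of type `j ≥ 1` form `γ^{ν-j} R \ γ^{ν-j+1} R`, and the character
sum of `d ↦ χ (c d)` over an ideal `γ^m R` is `|γ^m R| = q^{ν-m}` if `c γ^m = 0` and `0` otherwise.
-/

theorem AddChar.map_sum_eq_prod {A M ι : Type*} [AddCommMonoid A] [CommMonoid M]
    (χ : AddChar A M) (s : Finset ι) (f : ι → A) : χ (∑ i ∈ s, f i) = ∏ i ∈ s, χ (f i) := by
  induction s using Finset.cons_induction with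
  | empty => simp
  | cons a s ha ih => rw [Finset.sum_cons, Finset.prod_cons, AddChar.map_add_eq_mul, ih]

theorem AddChar.sum_apply_linearMap {R M : Type*} [CommRing R] [AddCommGroup M] [Module R M]
    [Fintype M] (χ : AddChar R ℂ) (hχ : ∀ I : Ideal R, (∀ x ∈ I, χ x = 1) → I = ⊥)
    (φ : M →ₗ[R] R) : ∑ x, χ (φ x) = if φ = 0 then (Fintype.card M : ℂ) else 0 := by
  have hψ : χ.compAddMonoidHom φ.toAddMonoidHom = 0 ↔ φ = 0 := by
    rw [AddChar.eq_zero_iff]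
    refine ⟨fun h => LinearMap.range_eq_bot.mp (hχ _ ?_), fun h x => by simp [h]⟩
    rintro _ ⟨x, rfl⟩
    exact h x
  exact (AddChar.sum_eq_ite _).trans (if_congr hψ rfl rfl)

theorem AddChar.sum_mul_mem_ideal {R : Type*} [CommRing R] (χ : AddChar R ℂ)
    (hχ : ∀ I : Ideal R, (∀ x ∈ I, χ x = 1) → I = ⊥) (I : Ideal R) [Fintype I] (c : R) :
    ∑ x : I, χ (c * x) = if ∀ x ∈ I, c * x = 0 then (Fintype.card I : ℂ) else 0 := by
  have h := χ.sum_apply_linearMap hχ (c • I.subtype)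
  simp only [LinearMap.smul_apply, Submodule.subtype_apply, smul_eq_mul] at h
  rw [h]
  congr 1
  simp [LinearMap.ext_iff]

theorem Fintype.prod_pow_card_fiber {ι κ M : Type*} [Fintype ι] [Fintype κ] [DecidableEq κ]
    [CommMonoid M] (t : ι → κ) (g : κ → M) :
    ∏ k, g k ^ (Finset.univ.filter fun i => t i = k).card = ∏ i, g (t i) := by
  rw [← Finset.prod_fiberwise' Finset.univ t g]
  exact Finset.prod_congr rfl fun k _ => (Finset.prod_const (g k)).symm

section MacWilliams

variable {R : Type*} [CommRing R] [Fintype R] (χ : AddChar R ℂ)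
  (hχ : ∀ I : Ideal R, (∀ x ∈ I, χ x = 1) → I = ⊥) {n : ℕ} (C : Submodule R (Fin n → R))
include hχ

theorem sum_addChar_dotProduct (v : Fin n → R) :
    ∑ u : C, χ (∑ ℓ, (u : Fin n → R) ℓ * v ℓ) =
      if v ∈ dualCode C then (Nat.card C : ℂ) else 0 := by
  rw [Nat.card_eq_fintype_card]
  refine (χ.sum_apply_linearMap hχ ((dotProductBilin R R).flip v ∘ₗ C.subtype)).trans
    (if_congr ?_ rfl rfl)
  simp only [LinearMap.ext_iff, LinearMap.comp_apply, LinearMap.flip_apply,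
    dotProductBilin_apply_apply, Submodule.subtype_apply, LinearMap.zero_apply]
  exact ⟨fun h u hu => h ⟨u, hu⟩, fun h u => h u u.2⟩

theorem card_smul_sum_dualCode {A : Type*} [AddCommGroup A] [Module ℂ A]
    (f : (Fin n → R) → A) :
    (Nat.card C : ℂ) • ∑ v : dualCode C, f v =
      ∑ u : C, ∑ v, χ (∑ ℓ, (u : Fin n → R) ℓ * v ℓ) • f v := by
  rw [Finset.sum_comm]
  simp_rw [← Finset.sum_smul, sum_addChar_dotProduct χ hχ C, ite_smul, zero_smul]
  rw [← Finset.sum_filter, Finset.smul_sum,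
    Finset.sum_subtype (p := (· ∈ dualCode C)) _ (by simp)]

theorem card_smul_sum_dualCode_prod {A : Type*} [CommRing A] [Algebra ℂ A] (g : R → A) :
    (Nat.card C : ℂ) • ∑ v : dualCode C, ∏ ℓ, g ((v : Fin n → R) ℓ) =
      ∑ u : C, ∏ ℓ, ∑ d, χ ((u : Fin n → R) ℓ * d) • g d := by
  rw [card_smul_sum_dualCode χ hχ C fun v => ∏ ℓ, g (v ℓ)]
  refine Finset.sum_congr rfl fun u _ => ?_
  simp_rw [Fintype.prod_sum, χ.map_sum_eq_prod, ← Finset.prod_smul]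

end MacWilliams

section CappedMultiplicity

variable {R : Type*} [CommRing R] (γ : R) (ν : ℕ)

def cappedMultiplicity (x : R) : ℕ :=
  Nat.findGreatest (fun m => γ ^ m ∣ x) ν

/-- For the representatives `a_i = γ ^ (ν - i)`, this is the `i` with `d R = a_i R`. -/
def typeIndex (d : R) : Fin (ν + 1) :=
  ⟨ν - cappedMultiplicity γ ν d, by omega⟩

variable {γ ν}

theorem cappedMultiplicity_le (x : R) : cappedMultiplicity γ ν x ≤ ν :=
  Nat.findGreatest_le ν

theorem pow_dvd_iff_le_cappedMultiplicity {m : ℕ} (hm : m ≤ ν) (x : R) :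
    γ ^ m ∣ x ↔ m ≤ cappedMultiplicity γ ν x := by
  refine ⟨fun h => Nat.le_findGreatest hm h, fun h => (pow_dvd_pow γ h).trans ?_⟩
  exact Nat.findGreatest_spec (P := fun m => γ ^ m ∣ x) (Nat.zero_le ν) (by simp)

theorem cappedMultiplicity_eq_of_dvd_of_dvd {x y : R} (hxy : x ∣ y) (hyx : y ∣ x) :
    cappedMultiplicity γ ν x = cappedMultiplicity γ ν y := by
  unfold cappedMultiplicity
  congr 1
  ext m
  exact ⟨fun h => h.trans hxy, fun h => h.trans hyx⟩

theorem typeIndex_eq_iff (d : R) (j : Fin (ν + 1)) :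
    typeIndex γ ν d = j ↔ cappedMultiplicity γ ν d = ν - j := by
  have := cappedMultiplicity_le (γ := γ) (ν := ν) d
  have := j.isLt
  rw [Fin.ext_iff]
  change ν - cappedMultiplicity γ ν d = (j : ℕ) ↔ _
  omega

theorem pow_eq_zero_of_pow_succ_dvd [IsLocalRing R] (hγ : γ ∈ IsLocalRing.maximalIdeal R)
    {m : ℕ} (h : γ ^ (m + 1) ∣ γ ^ m) : γ ^ m = 0 := by
  obtain ⟨z, hz⟩ := h
  have hunit : IsUnit (1 - γ * z) :=
    IsLocalRing.isUnit_one_sub_self_of_mem_nonunits _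
      ((IsLocalRing.maximalIdeal R).mul_mem_right z hγ)
  refine (hunit.mul_left_eq_zero).mp ?_
  linear_combination hz

theorem pow_eq_zero_iff_le [Nontrivial R] (hγν : γ ^ ν = 0)
    (hmin : ∀ m : ℕ, 0 < m → γ ^ m = 0 → ν ≤ m) {m : ℕ} : γ ^ m = 0 ↔ ν ≤ m := by
  refine ⟨fun h => ?_, fun h => by rw [← Nat.add_sub_cancel' h, pow_add, hγν, zero_mul]⟩
  rcases Nat.eq_zero_or_pos m with rfl | hm
  · exact absurd h (by simp)
  · exact hmin m hm h

end CappedMultiplicity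

/-- The entry `s_{ij}` of the matrix `S`, in closed form. -/
def chainCharSum (q ν i j : ℕ) : ℂ :=
  if j = 0 then 1
  else if j ≤ ν - i then (q : ℂ) ^ j - (q : ℂ) ^ (j - 1)
  else if j = ν + 1 - i then -(q : ℂ) ^ (ν - i)
  else 0

section ChainRing

variable {R : Type*} [CommRing R] [IsLocalRing R] {γ : R} {ν : ℕ}
  (hγ : IsLocalRing.maximalIdeal R = Ideal.span {γ}) (hγν : γ ^ ν = 0)
include hγ hγν

theorem exists_eq_pow_cappedMultiplicity_mul_unit (x : R) :
    ∃ u : Rˣ, x = γ ^ cappedMultiplicity γ ν x * u := by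
  obtain ⟨y, hy⟩ := (pow_dvd_iff_le_cappedMultiplicity (cappedMultiplicity_le x) x).mpr le_rfl
  rcases (cappedMultiplicity_le x).lt_or_eq with hk | hk
  · by_cases hyu : IsUnit y
    · exact ⟨hyu.unit, hy⟩
    · have hγy : γ ∣ y := by
        rw [← Ideal.mem_span_singleton, ← hγ]
        exact hyu
      obtain ⟨z, hz⟩ := hγy
      have : cappedMultiplicity γ ν x + 1 ≤ cappedMultiplicity γ ν x :=
        (pow_dvd_iff_le_cappedMultiplicity hk x).mp
          ⟨z, hy.trans (by rw [hz, pow_succ, mul_assoc])⟩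
      omega
  · exact ⟨1, hy.trans (by rw [hk, hγν, zero_mul, zero_mul])⟩

variable (hmin : ∀ m : ℕ, 0 < m → γ ^ m = 0 → ν ≤ m)
include hmin

theorem cappedMultiplicity_pow_mul_unit {m : ℕ} (hm : m ≤ ν) (u : Rˣ) :
    cappedMultiplicity γ ν (γ ^ m * u) = m := by
  rw [cappedMultiplicity_eq_of_dvd_of_dvd (Units.mul_right_dvd.mpr dvd_rfl) (dvd_mul_right _ _)]
  have hle := cappedMultiplicity_le (γ := γ) (ν := ν) (γ ^ m)
  refine le_antisymm ?_ ((pow_dvd_iff_le_cappedMultiplicity hm _).mp dvd_rfl)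
  by_contra! hlt
  have hdvd : γ ^ (m + 1) ∣ γ ^ m :=
    (pow_dvd_iff_le_cappedMultiplicity (by omega) _).mpr hlt
  have := (pow_eq_zero_iff_le hγν hmin).mp
    (pow_eq_zero_of_pow_succ_dvd (hγ ▸ Ideal.mem_span_singleton_self γ) hdvd)
  omega

theorem cappedMultiplicity_eq_iff {m : ℕ} (hm : m ≤ ν) {x : R} :
    cappedMultiplicity γ ν x = m ↔ ∃ u : Rˣ, x = γ ^ m * u := by
  refine ⟨fun h => h ▸ exists_eq_pow_cappedMultiplicity_mul_unit hγ hγν x, ?_⟩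
  rintro ⟨u, rfl⟩
  exact cappedMultiplicity_pow_mul_unit hγ hγν hmin hm u

theorem span_singleton_eq_span_pow_iff {m : ℕ} (hm : m ≤ ν) (x : R) :
    Ideal.span {x} = Ideal.span {γ ^ m} ↔ cappedMultiplicity γ ν x = m := by
  constructor
  · intro h
    rw [← cappedMultiplicity_pow_mul_unit hγ hγν hmin hm 1, Units.val_one, mul_one]
    exact cappedMultiplicity_eq_of_dvd_of_dvd (Ideal.span_singleton_le_span_singleton.mp h.ge)
      (Ideal.span_singleton_le_span_singleton.mp h.le)
  · rw [cappedMultiplicity_eq_iff hγ hγν hmin hm]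
    rintro ⟨u, rfl⟩
    exact Ideal.span_singleton_mul_right_unit u.isUnit _

theorem mul_pow_eq_zero_iff (c : R) (m : ℕ) :
    c * γ ^ m = 0 ↔ ν ≤ cappedMultiplicity γ ν c + m := by
  obtain ⟨u, hu⟩ := exists_eq_pow_cappedMultiplicity_mul_unit hγ hγν c
  conv_lhs => rw [hu, mul_right_comm, u.isUnit.mul_left_eq_zero, ← pow_add]
  exact pow_eq_zero_iff_le hγν hmin

theorem mul_pow_eq_zero_iff_pow_dvd {m : ℕ} (hm : m ≤ ν) (r : R) :
    r * γ ^ m = 0 ↔ γ ^ (ν - m) ∣ r := by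
  rw [mul_pow_eq_zero_iff hγ hγν hmin, pow_dvd_iff_le_cappedMultiplicity (Nat.sub_le ν m)]
  omega

theorem swc_eq_card_typeIndex {n : ℕ} (c : Fin n → R) (i : Fin (ν + 1)) :
    swc (fun i : Fin (ν + 1) => γ ^ (ν - (i : ℕ))) c i =
      (Finset.univ.filter fun ℓ => typeIndex γ ν (c ℓ) = i).card := by
  rw [swc, Nat.card_eq_fintype_card, Fintype.card_subtype]
  congr 1
  refine Finset.filter_congr fun ℓ _ => ?_
  rw [span_singleton_eq_span_pow_iff hγ hγν hmin (by omega), typeIndex_eq_iff]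

theorem prod_pow_swc {M : Type*} [CommMonoid M] {n : ℕ} (c : Fin n → R)
    (g : Fin (ν + 1) → M) :
    ∏ i, g i ^ swc (fun i : Fin (ν + 1) => γ ^ (ν - (i : ℕ))) c i =
      ∏ ℓ, g (typeIndex γ ν (c ℓ)) := by
  simp_rw [swc_eq_card_typeIndex hγ hγν hmin]
  exact Fintype.prod_pow_card_fiber _ g

theorem ker_toSpanSingleton_pow {m : ℕ} (hm : m ≤ ν) :
    LinearMap.ker (LinearMap.toSpanSingleton R R (γ ^ m)) = Ideal.span {γ ^ (ν - m)} := by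
  ext r
  rw [LinearMap.mem_ker, LinearMap.toSpanSingleton_apply, smul_eq_mul,
    mul_pow_eq_zero_iff_pow_dvd hγ hγν hmin hm, Ideal.mem_span_singleton]

/-- Multiplication by `γ ^ m` maps `γ^k R` onto `γ^(k+m) R` with kernel `γ^(ν-m) R`. -/
theorem card_span_pow_eq_mul {k m : ℕ} (hkm : k + m ≤ ν) :
    Nat.card (Ideal.span {γ ^ k}) =
      Nat.card (Ideal.span {γ ^ (ν - m)}) * Nat.card (Ideal.span {γ ^ (k + m)}) := by
  set f := (LinearMap.toSpanSingleton R R (γ ^ m)).domRestrict (Ideal.span {γ ^ k})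
  have hker : Nat.card (LinearMap.ker f) = Nat.card (Ideal.span {γ ^ (ν - m)}) := by
    rw [LinearMap.ker_domRestrict, ker_toSpanSingleton_pow hγ hγν hmin (by omega)]
    exact Nat.card_congr (Submodule.comapSubtypeEquivOfLe
      (Ideal.span_singleton_le_span_singleton.mpr (pow_dvd_pow γ (by omega)))).toEquiv
  have hrange : LinearMap.range f = Ideal.span {γ ^ (k + m)} := by
    rw [LinearMap.range_domRestrict, Submodule.map_span, Set.image_singleton,
      LinearMap.toSpanSingleton_apply, smul_eq_mul, ← pow_add]
  rw [Submodule.card_eq_card_quotient_mul_card (LinearMap.ker f), hker,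
    Nat.card_congr f.quotKerEquivRange.toEquiv, hrange]

theorem card_span_pow [Finite R] {q : ℕ} (hq : q = Nat.card (R ⧸ IsLocalRing.maximalIdeal R))
    {m : ℕ} (hm : m ≤ ν) : Nat.card (Ideal.span {γ ^ m}) = q ^ (ν - m) := by
  have hν : 0 < ν := Nat.pos_of_ne_zero (by rintro rfl; simp at hγν)
  have hq₁ : q = Nat.card (R ⧸ Ideal.span {γ}) := hγ ▸ hq
  have hsocle : Nat.card (Ideal.span {γ ^ (ν - 1)}) = q := by
    have h := card_span_pow_eq_mul hγ hγν hmin (k := 0) (m := 1) (by omega)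
    rw [pow_zero, Ideal.span_singleton_one, Nat.card_congr Submodule.topEquiv.toEquiv,
      Submodule.card_eq_card_quotient_mul_card (Ideal.span {γ}), ← hq₁, zero_add, pow_one,
      mul_comm] at h
    exact (Nat.eq_of_mul_eq_mul_right Nat.card_pos h).symm
  induction h : ν - m generalizing m with
  | zero =>
    rw [show m = ν by omega, hγν, Ideal.span_singleton_eq_bot.mpr rfl, pow_zero]
    exact Nat.card_unique
  | succ d ih =>
    rw [card_span_pow_eq_mul hγ hγν hmin (k := m) (m := 1) (by omega), hsocle,
      ih (by omega) (by omega), pow_succ, mul_comm]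

variable [Fintype R]

theorem swe_eq_sum_prod {n : ℕ} (C : Submodule R (Fin n → R)) :
    swe (fun i : Fin (ν + 1) => γ ^ (ν - (i : ℕ))) C =
      ∑ c : C, ∏ ℓ, X (typeIndex γ ν ((c : Fin n → R) ℓ)) := by
  simp_rw [swe, prod_pow_swc hγ hγν hmin _ X]
  congr
  exact Subsingleton.elim _ _

variable {q : ℕ} (hq : q = Nat.card (R ⧸ IsLocalRing.maximalIdeal R))
  (χ : AddChar R ℂ) (hχ : ∀ I : Ideal R, (∀ x ∈ I, χ x = 1) → I = ⊥)
include hq hχ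

theorem sum_addChar_mul_of_le_cappedMultiplicity (c : R) {m : ℕ} (hm : m ≤ ν) :
    ∑ d ∈ Finset.univ.filter (fun d => m ≤ cappedMultiplicity γ ν d), χ (c * d) =
      if ν ≤ cappedMultiplicity γ ν c + m then (q : ℂ) ^ (ν - m) else 0 := by
  have hmem : ∀ d, d ∈ Ideal.span {γ ^ m} ↔ m ≤ cappedMultiplicity γ ν d := fun d => by
    rw [Ideal.mem_span_singleton, pow_dvd_iff_le_cappedMultiplicity hm]
  have hann : (∀ x ∈ Ideal.span {γ ^ m}, c * x = 0) ↔ ν ≤ cappedMultiplicity γ ν c + m := by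
    rw [← mul_pow_eq_zero_iff hγ hγν hmin]
    refine ⟨fun h => h _ (Ideal.mem_span_singleton_self _), fun h x hx => ?_⟩
    obtain ⟨y, rfl⟩ := Ideal.mem_span_singleton.mp hx
    rw [← mul_assoc, h, zero_mul]
  rw [Finset.sum_subtype (p := (· ∈ Ideal.span {γ ^ m})) _ (fun d => by simp [hmem d]),
    χ.sum_mul_mem_ideal hχ, ← Nat.card_eq_fintype_card, card_span_pow hγ hγν hmin hq hm]
  simp only [hann, Nat.cast_pow]

theorem sum_addChar_mul_of_cappedMultiplicity_eq (c : R) {j : ℕ} (hj : j ≤ ν) :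
    ∑ d ∈ Finset.univ.filter (fun d => cappedMultiplicity γ ν d = ν - j), χ (c * d) =
      chainCharSum q ν (ν - cappedMultiplicity γ ν c) j := by
  have hc := cappedMultiplicity_le (γ := γ) (ν := ν) c
  rcases Nat.eq_zero_or_pos j with rfl | hj₀
  · have hzero : Finset.univ.filter (fun d => cappedMultiplicity γ ν d = ν - 0) = {0} := by
      ext d
      simp only [Finset.mem_filter, Finset.mem_univ, true_and, Finset.mem_singleton,
        Nat.sub_zero]
      rw [cappedMultiplicity_eq_iff hγ hγν hmin le_rfl, hγν]
      simp
    rw [hzero, Finset.sum_singleton, mul_zero, AddChar.map_zero_eq_one]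
    simp [chainCharSum]
  · have hshell : Finset.univ.filter (fun d => cappedMultiplicity γ ν d = ν - j) =
        Finset.univ.filter (fun d => ν - j ≤ cappedMultiplicity γ ν d) \
          Finset.univ.filter (fun d => ν - j + 1 ≤ cappedMultiplicity γ ν d) := by
      ext d
      simp only [Finset.mem_filter, Finset.mem_univ, true_and, Finset.mem_sdiff]
      omega
    rw [hshell, Finset.sum_sdiff_eq_sub (Finset.monotone_filter_right _ fun d h => by omega),
      sum_addChar_mul_of_le_cappedMultiplicity hγ hγν hmin hq χ hχ c (by omega),
      sum_addChar_mul_of_le_cappedMultiplicity hγ hγν hmin hq χ hχ c (by omega), chainCharSum,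
      show ν - (ν - j) = j by omega, show ν - (ν - j + 1) = j - 1 by omega,
      show ν - (ν - cappedMultiplicity γ ν c) = cappedMultiplicity γ ν c by omega,
      show ν + 1 - (ν - cappedMultiplicity γ ν c) = cappedMultiplicity γ ν c + 1 by omega]
    split_ifs <;> first | omega | simp [*]

theorem chainCharSum_eq_sum_units {i j : ℕ} (hi : i ≤ ν) (hj : j ≤ ν) :
    chainCharSum q ν i j =
      ∑ r : R, if ∃ u : Rˣ, r = γ ^ (ν - j) * u then χ (r * γ ^ (ν - i)) else 0 := by
  have hcm : cappedMultiplicity γ ν (γ ^ (ν - i)) = ν - i := by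
    simpa using cappedMultiplicity_pow_mul_unit hγ hγν hmin (Nat.sub_le ν i) 1
  rw [← Finset.sum_filter]
  simp_rw [← cappedMultiplicity_eq_iff hγ hγν hmin (Nat.sub_le ν j), mul_comm _ (γ ^ (ν - i))]
  rw [sum_addChar_mul_of_cappedMultiplicity_eq hγ hγν hmin hq χ hχ _ hj, hcm,
    Nat.sub_sub_self hi]

theorem sum_addChar_mul_smul_typeIndex {A : Type*} [AddCommMonoid A] [Module ℂ A] (c : R)
    (g : Fin (ν + 1) → A) :
    ∑ d, χ (c * d) • g (typeIndex γ ν d) =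
      ∑ j : Fin (ν + 1), chainCharSum q ν (typeIndex γ ν c) j • g j := by
  rw [← Finset.sum_fiberwise Finset.univ (typeIndex γ ν)]
  refine Finset.sum_congr rfl fun j _ => ?_
  rw [Finset.sum_congr rfl fun d hd => by rw [(Finset.mem_filter.mp hd).2], ← Finset.sum_smul]
  simp_rw [typeIndex_eq_iff]
  rw [sum_addChar_mul_of_cappedMultiplicity_eq hγ hγν hmin hq χ hχ c (by omega)]
  rfl

end ChainRing

theorem stmt11 {R : Type*} [CommRing R] [Fintype R] [IsLocalRing R]
    (γ : R) (hγ : IsLocalRing.maximalIdeal R = Ideal.span {γ})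
    (ν : ℕ) (hγν : γ ^ ν = 0)
    (hmin : ∀ m : ℕ, 0 < m → γ ^ m = 0 → ν ≤ m)
    (q : ℕ) (hq : q = Nat.card (R ⧸ IsLocalRing.maximalIdeal R))
    (χ : AddChar R ℂ)
    (hχ : ∀ I : Ideal R, (∀ x ∈ I, χ x = 1) → I = ⊥)
    {n : ℕ} (C : Submodule R (Fin n → R))
    (S : Matrix (Fin (ν + 1)) (Fin (ν + 1)) ℂ)
    (hS : ∀ i j : Fin (ν + 1), S i j =
      if (j : ℕ) = 0 then 1
      else if (j : ℕ) ≤ ν - (i : ℕ) then (q : ℂ) ^ (j : ℕ) - (q : ℂ) ^ ((j : ℕ) - 1)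
      else if (j : ℕ) = ν + 1 - (i : ℕ) then -(q : ℂ) ^ (ν - (i : ℕ))
      else 0) :
    (∀ i j : Fin (ν + 1), S i j =
      ∑ r : R, if ∃ u : Rˣ, r = γ ^ (ν - (j : ℕ)) * (u : R)
        then χ (r * γ ^ (ν - (i : ℕ))) else 0) ∧
    swe (fun i : Fin (ν + 1) => γ ^ (ν - (i : ℕ))) (dualCode C) =
      MvPolynomial.C ((Nat.card C : ℂ)⁻¹) *
        (MvPolynomial.bind₁ (fun i : Fin (ν + 1) =>
          ∑ j : Fin (ν + 1), MvPolynomial.C (S i j) * X j))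
          (swe (fun i : Fin (ν + 1) => γ ^ (ν - (i : ℕ))) C) := by
  have hS' : ∀ i j, S i j = chainCharSum q ν i j := hS
  refine ⟨fun i j => (hS' i j).trans
    (chainCharSum_eq_sum_units hγ hγν hmin hq χ hχ (by omega) (by omega)), ?_⟩
  have hC : (Nat.card C : ℂ) ≠ 0 := Nat.cast_ne_zero.mpr Nat.card_pos.ne'
  have htransform : ∀ c : R, ∑ d, χ (c * d) • X (typeIndex γ ν d) =
      ∑ j, MvPolynomial.C (S (typeIndex γ ν c) j) * X j := fun c => by
    simp_rw [sum_addChar_mul_smul_typeIndex hγ hγν hmin hq χ hχ, hS', MvPolynomial.smul_eq_C_mul]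
  rw [swe_eq_sum_prod hγ hγν hmin C, swe_eq_sum_prod hγ hγν hmin (dualCode C), map_sum]
  simp_rw [map_prod, MvPolynomial.bind₁_X_right, ← htransform,
    ← card_smul_sum_dualCode_prod χ hχ C, MvPolynomial.smul_eq_C_mul]
  rw [← mul_assoc, ← map_mul, inv_mul_cancel₀ hC, map_one, one_mul]
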